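/- arXiv:2305.09668 — 3 statements merged into one kernel-verified Lean document; each statement's English description precedes it below -/
import Mathlib

section
/- Let n ≥ 1 and let k be an integer with 1 ≤ k ≤ n, f = k/n, and 0 < ε₁ ≤ ε₂ with ε₂/ε₁ ≥ R = 1 + 8/(ε₁² n f). Then there exists an ε-DP Markov kernel M from [−1/2,1/2]^n to [−1/2,1/2] (with privacy vector ε_i = ε₁ for 1 ≤ i ≤ k and ε_i = ε₂ for k < i ≤ n) whose worst-case error satisfies E(M) ≤ min{ R/(4n(f + (1−f)R)), 1/4 } = min{ (n f ε₁² + 8)/(4n(n f ε₁² + 8(1−f))), 1/4 }. -/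
open MeasureTheory ProbabilityTheory Real

noncomputable section

abbrev UnitI : Set ℝ := Set.Icc (-(1:ℝ)/2) (1/2)

abbrev Dataset (n : ℕ) : Type := Fin n → UnitI

def INeighbor {n : ℕ} (i : Fin n) (x x' : Dataset n) : Prop :=
  ∀ j : Fin n, j ≠ i → x j = x' j

def IsDP {n : ℕ} {Y : Type} [MeasurableSpace Y]
    (ε : Fin n → ℝ) (M : Kernel (Dataset n) Y) : Prop :=
  ∀ i : Fin n, ∀ x x' : Dataset n, INeighbor i x x' →
    ∀ S : Set Y, MeasurableSet S →
      M x S ≤ ENNReal.ofReal (Real.exp (ε i)) * M x' S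

def meanOf (P : Measure UnitI) : ℝ := ∫ z, (z : ℝ) ∂P

def errOf {n : ℕ} (M : Kernel (Dataset n) UnitI) (P : Measure UnitI) : ℝ :=
  ∫ x, (∫ y, ((y : ℝ) - meanOf P)^2 ∂(M x)) ∂(Measure.pi fun _ : Fin n => P)

def wcError {n : ℕ} (M : Kernel (Dataset n) UnitI) : ℝ :=
  ⨆ P : {P : Measure UnitI // IsProbabilityMeasure P}, errOf M P.1

def minimaxRisk (n : ℕ) (ε : Fin n → ℝ) : ℝ :=
  ⨅ M : {M : Kernel (Dataset n) UnitI // IsMarkovKernel M ∧ IsDP ε M}, wcError M.1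

def twoGroup (n k : ℕ) (ε₁ ε₂ : ℝ) : Fin n → ℝ :=
  fun i => if (i : ℕ) < k then ε₁ else ε₂

/-!
The mechanism releases the weighted mean `∑ wᵢ xᵢ` with weights `1 / D` on the first `k`
coordinates and `R / D` on the others (`D = k + (n - k) R`), perturbed by Laplace noise of rate
`c = D ε₁` and clipped back to `[-1/2, 1/2]`. Changing `xᵢ` moves the weighted mean by at most
`wᵢ`, and the Laplace density changes by a factor at most `exp (c |Δ|)` under a shift `Δ`, so the
mechanism is private since `c wᵢ` is `ε₁` on the first group and `R ε₁ ≤ ε₂` on the second.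
Clipping only moves the output closer to the true mean, so the error is at most the variance of
the weighted mean, `∑ wᵢ² / 4` by Popoviciu's inequality, plus the Laplace variance `2 / c²`;
since `8 / ε₁² = k (R - 1)`, this sum is exactly `R / (4 D)`. When that exceeds `1 / 4`, the
constant output `0` does better.
-/

open Set
open scoped ENNReal Nat

section ExpAbsMoments

variable {c : ℝ}

lemma integral_abs_pow_mul_exp_neg_mul_abs (hc : 0 < c) (j : ℕ) :
    ∫ u, |u| ^ j * exp (-(c * |u|)) = 2 * (j ! / c ^ (j + 1)) := by
  have h := integral_rpow_mul_exp_neg_mul_Ioi (a := j + 1) (by positivity) hc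
  rw [add_sub_cancel_right, Real.Gamma_nat_eq_factorial, ← Nat.cast_add_one] at h
  simp only [Real.rpow_natCast] at h
  rw [integral_comp_abs (f := fun t => t ^ j * exp (-(c * t))), h, one_div, inv_pow]
  field_simp

lemma integrable_abs_pow_mul_exp_neg_mul_abs (hc : 0 < c) (j : ℕ) :
    Integrable fun u : ℝ => |u| ^ j * exp (-(c * |u|)) :=
  .of_integral_ne_zero <| by rw [integral_abs_pow_mul_exp_neg_mul_abs hc]; positivity

lemma integrable_pow_mul_exp_neg_mul_abs (hc : 0 < c) (j : ℕ) :
    Integrable fun u : ℝ => u ^ j * exp (-(c * |u|)) :=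
  (integrable_abs_pow_mul_exp_neg_mul_abs hc j).mono' (by fun_prop) <| .of_forall fun u => by
    simp

lemma integral_exp_neg_mul_abs (hc : 0 < c) : ∫ u, exp (-(c * |u|)) = 2 / c := by
  simpa [div_eq_mul_inv] using integral_abs_pow_mul_exp_neg_mul_abs hc 0

lemma integral_sq_mul_exp_neg_mul_abs (hc : 0 < c) :
    ∫ u, u ^ 2 * exp (-(c * |u|)) = 4 / c ^ 3 := by
  have h := integral_abs_pow_mul_exp_neg_mul_abs hc 2
  simp only [sq_abs] at h
  rw [h]; norm_num [Nat.factorial]; ring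

lemma integral_mul_exp_neg_mul_abs (c : ℝ) : ∫ u, u * exp (-(c * |u|)) = 0 := by
  have h := integral_neg_eq_self (fun u : ℝ => u * exp (-(c * |u|))) volume
  simp only [neg_mul, abs_neg, integral_neg] at h
  linarith

end ExpAbsMoments

section Laplace

variable {m c : ℝ}

def laplacePDFReal (m c y : ℝ) : ℝ := c / 2 * exp (-(c * |y - m|))

def laplaceReal (m c : ℝ) : Measure ℝ :=
  volume.withDensity fun y => ENNReal.ofReal (laplacePDFReal m c y)

@[fun_prop]
lemma measurable_laplacePDFReal_uncurry (c : ℝ) :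
    Measurable fun p : ℝ × ℝ => laplacePDFReal p.1 c p.2 := by
  unfold laplacePDFReal; fun_prop

lemma laplacePDFReal_nonneg (hc : 0 ≤ c) (m y : ℝ) : 0 ≤ laplacePDFReal m c y := by
  unfold laplacePDFReal; positivity

lemma integral_laplaceReal (hc : 0 ≤ c) (g : ℝ → ℝ) :
    ∫ y, g y ∂laplaceReal m c = c / 2 * ∫ u, exp (-(c * |u|)) * g (u + m) := by
  rw [laplaceReal, integral_withDensity_eq_integral_toReal_smul (by fun_prop)
    (.of_forall fun _ => ENNReal.ofReal_lt_top), ← integral_const_mul,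
    ← integral_add_right_eq_self _ m]
  congr with u
  rw [ENNReal.toReal_ofReal (laplacePDFReal_nonneg hc _ _), laplacePDFReal, add_sub_cancel_right,
    smul_eq_mul, mul_assoc]

lemma isProbabilityMeasure_laplaceReal (hc : 0 < c) : IsProbabilityMeasure (laplaceReal m c) := by
  have h := integral_laplaceReal (m := m) hc.le fun _ => 1
  simp_rw [mul_one, integral_exp_neg_mul_abs hc, integral_const, smul_eq_mul, mul_one,
    measureReal_def] at h
  rw [show c / 2 * (2 / c) = 1 by field_simp, ENNReal.toReal_eq_one_iff] at h
  exact ⟨h⟩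

lemma integral_sub_sq_laplaceReal (hc : 0 < c) (μ : ℝ) :
    ∫ y, (y - μ) ^ 2 ∂laplaceReal m c = (m - μ) ^ 2 + 2 / c ^ 2 := by
  have h2 := integrable_pow_mul_exp_neg_mul_abs hc 2
  have h1 := (integrable_pow_mul_exp_neg_mul_abs hc 1).const_mul (2 * (m - μ))
  have h0 := (integrable_pow_mul_exp_neg_mul_abs hc 0).const_mul ((m - μ) ^ 2)
  simp only [pow_one, pow_zero, one_mul] at h1 h0
  have hsplit : ∫ u, exp (-(c * |u|)) * (u + m - μ) ^ 2 = (∫ u, u ^ 2 * exp (-(c * |u|))) +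
      2 * (m - μ) * (∫ u, u * exp (-(c * |u|))) + (m - μ) ^ 2 * ∫ u, exp (-(c * |u|)) := by
    rw [← integral_const_mul, ← integral_const_mul, ← integral_add h2 h1,
      ← integral_add (h2.fun_add h1) h0]
    congr with u; ring
  rw [integral_laplaceReal hc.le, hsplit, integral_sq_mul_exp_neg_mul_abs hc,
    integral_mul_exp_neg_mul_abs, integral_exp_neg_mul_abs hc]
  field_simp
  ring

lemma integrable_sub_sq_laplaceReal (hc : 0 < c) (μ : ℝ) :
    Integrable (fun y => (y - μ) ^ 2) (laplaceReal m c) :=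
  .of_integral_ne_zero <| by rw [integral_sub_sq_laplaceReal hc]; positivity

lemma laplacePDFReal_le (hc : 0 ≤ c) (m m' y : ℝ) :
    laplacePDFReal m c y ≤ exp (c * |m - m'|) * laplacePDFReal m' c y := by
  have htri : |y - m'| ≤ |y - m| + |m - m'| := abs_sub_le y m m'
  rw [laplacePDFReal, laplacePDFReal, mul_left_comm, ← exp_add]
  gcongr
  nlinarith

lemma laplaceReal_le (hc : 0 ≤ c) (m m' : ℝ) (s : Set ℝ) :
    laplaceReal m c s ≤ ENNReal.ofReal (exp (c * |m - m'|)) * laplaceReal m' c s := by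
  rw [laplaceReal, laplaceReal, withDensity_apply', withDensity_apply',
    ← lintegral_const_mul' _ _ ENNReal.ofReal_ne_top]
  refine lintegral_mono fun y => ?_
  rw [← ENNReal.ofReal_mul (exp_pos _).le]
  exact ENNReal.ofReal_le_ofReal (laplacePDFReal_le hc m m' y)

def laplaceKernel (c : ℝ) : Kernel ℝ ℝ :=
  (Kernel.const ℝ volume).withDensity fun m y => ENNReal.ofReal (laplacePDFReal m c y)

lemma laplaceKernel_apply (c m : ℝ) : laplaceKernel c m = laplaceReal m c := by
  rw [laplaceKernel, Kernel.withDensity_apply _ (by fun_prop), Kernel.const_apply, laplaceReal]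

lemma isMarkovKernel_laplaceKernel (hc : 0 < c) : IsMarkovKernel (laplaceKernel c) :=
  ⟨fun m => by rw [laplaceKernel_apply]; exact isProbabilityMeasure_laplaceReal hc⟩

end Laplace

section Mechanism

variable {n : ℕ}

lemma abs_sub_le_one_of_unitI (a b : UnitI) : |(a : ℝ) - b| ≤ 1 := by
  have h := Real.dist_le_of_mem_Icc a.2 b.2
  norm_num [Real.dist_eq] at h
  exact h

def weightedMean (w : Fin n → ℝ) (x : Dataset n) : ℝ := ∑ i, w i * (x i : ℝ)

@[fun_prop]
lemma measurable_weightedMean (w : Fin n → ℝ) : Measurable (weightedMean w) := by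
  unfold weightedMean; fun_prop

lemma abs_weightedMean_sub_le {w : Fin n → ℝ} {i : Fin n} {x x' : Dataset n}
    (h : INeighbor i x x') : |weightedMean w x - weightedMean w x'| ≤ |w i| := by
  have hsum : weightedMean w x - weightedMean w x' = w i * ((x i : ℝ) - x' i) := by
    rw [weightedMean, weightedMean, ← Finset.sum_sub_distrib,
      Finset.sum_eq_single_of_mem i (Finset.mem_univ i) fun j _ hj => by rw [h j hj, sub_self]]
    ring
  rw [hsum, abs_mul]
  exact mul_le_of_le_one_right (abs_nonneg _) (abs_sub_le_one_of_unitI _ _)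

def clip (y : ℝ) : UnitI := projIcc (-(1 : ℝ) / 2) (1 / 2) (by norm_num) y

@[fun_prop]
lemma measurable_clip : Measurable clip := (continuous_projIcc (h := by norm_num)).measurable

lemma sub_sq_clip_le {μ : ℝ} (hμ : μ ∈ UnitI) (y : ℝ) : ((clip y : ℝ) - μ) ^ 2 ≤ (y - μ) ^ 2 := by
  have h := abs_projIcc_sub_projIcc (by norm_num : -(1 : ℝ) / 2 ≤ 1 / 2) (c := y) (d := μ)
  rw [projIcc_of_mem _ hμ] at h
  exact sq_le_sq.mpr h

def laplaceMechanism (c : ℝ) (w : Fin n → ℝ) : Kernel (Dataset n) UnitI :=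
  ((laplaceKernel c).comap (weightedMean w) (measurable_weightedMean w)).map clip

lemma laplaceMechanism_apply (c : ℝ) (w : Fin n → ℝ) (x : Dataset n) :
    laplaceMechanism c w x = (laplaceReal (weightedMean w x) c).map clip := by
  rw [laplaceMechanism, Kernel.map_apply _ measurable_clip, Kernel.comap_apply,
    laplaceKernel_apply]

lemma isMarkovKernel_laplaceMechanism {c : ℝ} (hc : 0 < c) (w : Fin n → ℝ) :
    IsMarkovKernel (laplaceMechanism c w) :=
  have := isMarkovKernel_laplaceKernel hc
  Kernel.IsMarkovKernel.map _ measurable_clip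

lemma isDP_laplaceMechanism {c : ℝ} (hc : 0 ≤ c) {w ε : Fin n → ℝ}
    (hε : ∀ i, c * |w i| ≤ ε i) : IsDP ε (laplaceMechanism c w) := by
  intro i x x' h S hS
  simp only [laplaceMechanism_apply, Measure.map_apply measurable_clip hS]
  refine (laplaceReal_le hc _ _ _).trans (mul_le_mul_left ?_ _)
  gcongr
  exact (mul_le_mul_of_nonneg_left (abs_weightedMean_sub_le h) hc).trans (hε i)

lemma integral_sub_sq_laplaceMechanism_le {c : ℝ} (hc : 0 < c) (w : Fin n → ℝ) (x : Dataset n)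
    {μ : ℝ} (hμ : μ ∈ UnitI) :
    ∫ y, ((y : ℝ) - μ) ^ 2 ∂laplaceMechanism c w x ≤ (weightedMean w x - μ) ^ 2 + 2 / c ^ 2 := by
  rw [laplaceMechanism_apply, integral_map measurable_clip.aemeasurable
    (by fun_prop), ← integral_sub_sq_laplaceReal hc]
  exact integral_mono_of_nonneg (.of_forall fun _ => sq_nonneg _)
    (integrable_sub_sq_laplaceReal hc μ) (.of_forall (sub_sq_clip_le hμ))

end Mechanism

section Error

variable {n : ℕ} (P : Measure UnitI) [IsProbabilityMeasure P]

lemma memLp_coe_unitI (p : ℝ≥0∞) : MemLp (fun z : UnitI => (z : ℝ)) p P :=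
  memLp_of_bounded (.of_forall fun z => z.2) (by fun_prop) p

lemma meanOf_mem : meanOf P ∈ UnitI :=
  (convex_Icc _ _).integral_mem isClosed_Icc (.of_forall fun z => z.2)
    ((memLp_coe_unitI P 1).integrable le_rfl)

lemma weightedMean_eq_sum (w : Fin n → ℝ) :
    weightedMean w = ∑ i, fun x : Dataset n => w i * (x i : ℝ) := by
  ext x; simp [weightedMean]

lemma memLp_weightedMean (w : Fin n → ℝ) : MemLp (weightedMean w) 2 (Measure.pi fun _ => P) := by
  rw [weightedMean_eq_sum]
  exact memLp_finsetSum' _ fun i _ =>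
    ((memLp_coe_unitI P 2).const_mul (w i)).comp_measurePreserving (measurePreserving_eval _ i)

lemma integral_weightedMean {w : Fin n → ℝ} (hw : ∑ i, w i = 1) :
    ∫ x, weightedMean w x ∂Measure.pi (fun _ => P) = meanOf P := by
  have hint := (memLp_coe_unitI P 1).integrable le_rfl
  have hterm (i : Fin n) : ∫ x : Dataset n, w i * (x i : ℝ) ∂Measure.pi (fun _ => P) =
      w i * meanOf P := by
    rw [integral_comp_eval (μ := fun _ => P) (f := fun z : UnitI => w i * (z : ℝ)) (by fun_prop),
      integral_const_mul, meanOf]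
  simp_rw [weightedMean]
  rw [integral_finsetSum _ fun i _ =>
    integrable_comp_eval (μ := fun _ => P) (f := fun z : UnitI => w i * (z : ℝ)) (hint.const_mul _)]
  simp_rw [hterm, ← Finset.sum_mul, hw, one_mul]

lemma variance_weightedMean_le (w : Fin n → ℝ) :
    Var[weightedMean w; Measure.pi fun _ => P] ≤ (∑ i, w i ^ 2) / 4 := by
  rw [weightedMean_eq_sum, variance_sum_pi fun i => (memLp_coe_unitI P 2).const_mul (w i),
    Finset.sum_div]
  gcongr with i
  have h := variance_le_sq_of_bounded (μ := P) (.of_forall fun z => z.2) (by fun_prop)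
  rw [variance_const_mul]
  norm_num at h
  nlinarith [sq_nonneg (w i)]

lemma errOf_laplaceMechanism_le {c : ℝ} (hc : 0 < c) {w : Fin n → ℝ} (hw : ∑ i, w i = 1) :
    errOf (laplaceMechanism c w) P ≤ (∑ i, w i ^ 2) / 4 + 2 / c ^ 2 := by
  have hsq : Integrable (fun x => (weightedMean w x - meanOf P) ^ 2) (Measure.pi fun _ => P) :=
    ((memLp_weightedMean P w).sub (memLp_const _)).integrable_sq
  calc errOf (laplaceMechanism c w) P
      ≤ ∫ x, ((weightedMean w x - meanOf P) ^ 2 + 2 / c ^ 2) ∂Measure.pi (fun _ => P) :=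
        integral_mono_of_nonneg (.of_forall fun _ => integral_nonneg fun _ => sq_nonneg _)
          (hsq.add (integrable_const _))
          (.of_forall fun x => integral_sub_sq_laplaceMechanism_le hc w x (meanOf_mem P))
    _ = Var[weightedMean w; Measure.pi fun _ => P] + 2 / c ^ 2 := by
        rw [integral_add hsq (integrable_const _), variance_eq_integral (by fun_prop),
          integral_weightedMean P hw]
        simp
    _ ≤ (∑ i, w i ^ 2) / 4 + 2 / c ^ 2 := by
        gcongr; exact variance_weightedMean_le P w

lemma errOf_const_dirac (z : UnitI) :
    errOf (Kernel.const (Dataset n) (Measure.dirac z)) P = ((z : ℝ) - meanOf P) ^ 2 := by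
  simp [errOf]

end Error

lemma isDP_const {n : ℕ} {Y : Type} [MeasurableSpace Y] {ε : Fin n → ℝ} (hε : ∀ i, 0 ≤ ε i)
    (μ : Measure Y) : IsDP ε (Kernel.const (Dataset n) μ) := by
  intro i x x' _ S _
  rw [Kernel.const_apply, Kernel.const_apply]
  refine le_mul_of_one_le_left' ?_
  rw [← ENNReal.ofReal_one]
  exact ENNReal.ofReal_le_ofReal (one_le_exp (hε i))

lemma wcError_le {n : ℕ} {M : Kernel (Dataset n) UnitI} {B : ℝ}
    (h : ∀ (P : Measure UnitI) [IsProbabilityMeasure P], errOf M P ≤ B) : wcError M ≤ B :=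
  have : Nonempty {P : Measure UnitI // IsProbabilityMeasure P} :=
    ⟨⟨Measure.dirac ⟨0, by norm_num⟩, inferInstance⟩⟩
  ciSup_le fun ⟨P, _⟩ => h P

lemma sum_twoGroup {n k : ℕ} (hkn : k ≤ n) (a b : ℝ) (g : ℝ → ℝ) :
    ∑ i, g (twoGroup n k a b i) = k * g a + (n - k) * g b := by
  have hlow : ∑ i ∈ Finset.range k, g (if i < k then a else b) = ∑ _i ∈ Finset.range k, g a :=
    Finset.sum_congr rfl fun i hi => by rw [if_pos (Finset.mem_range.mp hi)]
  have hhigh : ∑ i ∈ Finset.Ico k n, g (if i < k then a else b) = ∑ _i ∈ Finset.Ico k n, g b :=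
    Finset.sum_congr rfl fun i hi => by rw [if_neg (Finset.mem_Ico.mp hi).1.not_gt]
  unfold twoGroup
  rw [Fin.sum_univ_eq_sum_range (fun i => g (if i < k then a else b)),
    ← Finset.sum_range_add_sum_Ico _ hkn, hlow, hhigh]
  simp [Nat.cast_sub hkn]

lemma exists_isDP_wcError_le_quarter {n : ℕ} {ε : Fin n → ℝ} (hε : ∀ i, 0 ≤ ε i) :
    ∃ M : Kernel (Dataset n) UnitI, IsMarkovKernel M ∧ IsDP ε M ∧ wcError M ≤ 1 / 4 := by
  refine ⟨Kernel.const _ (Measure.dirac ⟨0, by norm_num⟩), inferInstance, isDP_const hε _,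
    wcError_le fun P _ => ?_⟩
  have h := meanOf_mem P
  rw [errOf_const_dirac]
  nlinarith [h.1, h.2]

lemma exists_isDP_twoGroup_wcError_le {n k : ℕ} (hk1 : 1 ≤ k) (hkn : k ≤ n) {ε₁ ε₂ R : ℝ}
    (hε₁ : 0 < ε₁) (hR : R = 1 + 8 / (ε₁ ^ 2 * k)) (hRε : R * ε₁ ≤ ε₂) :
    ∃ M : Kernel (Dataset n) UnitI, IsMarkovKernel M ∧ IsDP (twoGroup n k ε₁ ε₂) M ∧
      wcError M ≤ R / (4 * (k + (n - k) * R)) := by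
  have hk : (0 : ℝ) < k := by exact_mod_cast hk1
  have hkn' : (k : ℝ) ≤ n := by exact_mod_cast hkn
  have hR1 : 1 ≤ R := by rw [hR]; exact le_add_of_nonneg_right (by positivity)
  set D : ℝ := k + (n - k) * R with hD
  have hDpos : 0 < D := by nlinarith
  set w : Fin n → ℝ := fun i => twoGroup n k 1 R i / D
  have hw : ∑ i, w i = 1 := by
    rw [sum_twoGroup hkn 1 R (· / D)]
    field_simp
    exact hD.symm
  have hwsq : (∑ i, w i ^ 2) / 4 + 2 / (D * ε₁) ^ 2 = R / (4 * D) := by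
    have h8 : 8 = k * (R - 1) * ε₁ ^ 2 := by rw [hR]; field_simp; ring
    rw [sum_twoGroup hkn 1 R fun t => (t / D) ^ 2]
    field_simp
    rw [hD]
    linear_combination h8
  have hε : ∀ i, D * ε₁ * |w i| ≤ twoGroup n k ε₁ ε₂ i := by
    intro i
    simp only [w, twoGroup]
    split_ifs
    · rw [abs_of_pos (by positivity), show D * ε₁ * (1 / D) = ε₁ by field_simp]
    · rw [abs_of_pos (by positivity), show D * ε₁ * (R / D) = R * ε₁ by field_simp]
      exact hRε
  refine ⟨laplaceMechanism (D * ε₁) w, isMarkovKernel_laplaceMechanism (by positivity) w,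
    isDP_laplaceMechanism (by positivity) hε, wcError_le fun P _ => ?_⟩
  exact (errOf_laplaceMechanism_le P (by positivity) hw).trans_eq hwsq

theorem upper_bound_regime_B_general
    (n k : ℕ) (hk1 : 1 ≤ k) (hkn : k ≤ n)
    (ε₁ ε₂ f R : ℝ)
    (hε₁ : 0 < ε₁) (hε₁₂ : ε₁ ≤ ε₂)
    (hf : f = (k : ℝ) / n)
    (hR : R = 1 + 8 / (ε₁ ^ 2 * n * f))
    (hrR : R ≤ ε₂ / ε₁) :
    min (R / (4 * n * (f + (1 - f) * R))) (1 / 4)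
      = min ((n * f * ε₁ ^ 2 + 8) / (4 * n * (n * f * ε₁ ^ 2 + 8 * (1 - f)))) (1 / 4) ∧
    ∃ M : Kernel (Dataset n) UnitI, IsMarkovKernel M ∧
      IsDP (twoGroup n k ε₁ ε₂) M ∧
      wcError M ≤ min (R / (4 * n * (f + (1 - f) * R))) (1 / 4) := by
  have hn : (0 : ℝ) < n := by exact_mod_cast hk1.trans hkn
  have hnf : n * f = k := by rw [hf]; field_simp
  have hRk : R = 1 + 8 / (ε₁ ^ 2 * k) := by rw [hR, mul_assoc, hnf]
  have hden : 4 * n * (f + (1 - f) * R) = 4 * (k + (n - k) * R) := by rw [hf]; field_simp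
  refine ⟨?_, ?_⟩
  · rw [hden, hnf, hf, hRk]
    congr 1
    field_simp
    ring
  · have hε : ∀ i, 0 ≤ twoGroup n k ε₁ ε₂ i := fun i => by
      unfold twoGroup; split_ifs <;> linarith
    obtain ⟨M₁, hM₁, hdp₁, herr₁⟩ :=
      exists_isDP_twoGroup_wcError_le hk1 hkn hε₁ hRk ((le_div_iff₀ hε₁).mp hrR)
    obtain ⟨M₂, hM₂, hdp₂, herr₂⟩ := exists_isDP_wcError_le_quarter hε
    rw [hden]
    rcases le_total (R / (4 * (k + (n - k) * R))) (1 / 4) with h | h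
    · exact ⟨M₁, hM₁, hdp₁, by rwa [min_eq_left h]⟩
    · exact ⟨M₂, hM₂, hdp₂, by rwa [min_eq_right h]⟩

theorem upper_bound_regime_B
    (n k : ℕ) (hn : 1 ≤ n) (hk1 : 1 ≤ k) (hkn : k ≤ n)
    (ε₁ ε₂ f R : ℝ)
    (hε₁ : 0 < ε₁) (hε₁₂ : ε₁ ≤ ε₂)
    (hf : f = (k : ℝ) / n)
    (hR : R = 1 + 8 / (ε₁ ^ 2 * n * f))
    (hrR : R ≤ ε₂ / ε₁) :
    min (R / (4 * n * (f + (1 - f) * R))) (1 / 4)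
      = min ((n * f * ε₁ ^ 2 + 8) / (4 * n * (n * f * ε₁ ^ 2 + 8 * (1 - f)))) (1 / 4) ∧
    ∃ M : Kernel (Dataset n) UnitI, IsMarkovKernel M ∧
      IsDP (twoGroup n k ε₁ ε₂) M ∧
      wcError M ≤ min (R / (4 * n * (f + (1 - f) * R))) (1 / 4) :=
  upper_bound_regime_B_general n k hk1 hkn ε₁ ε₂ f R hε₁ hε₁₂ hf hR hrR
end
end

section
/- Let 0 ≤ δ ≤ 1/2 and let P₁ = P_δ and P₂ = P_{−δ}, where P_δ is the probability measure on ℝ with P_δ({1/2}) = (1+δ)/2 and P_δ({−1/2}) = (1−δ)/2. Let M be an ε-DP Markov kernel from [−1/2,1/2]^n to a measurable space Y, and for j = 1, 2 let Q_j(S) = ∫ M(x)(S) dP_j^{⊗n}(x). Then for every k ∈ {0, 1, …, n}: ‖Q₁ − Q₂‖_TV ≤ 2δ · Σ_{i=1}^k ε_i + δ · √(3(n−k)/2). -/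
open MeasureTheory ProbabilityTheory Real

noncomputable section

/-- Total variation distance: `sup_S |P(S) − Q(S)|` over measurable sets `S`. -/
def tvDist {Y : Type*} [MeasurableSpace Y] (P Q : Measure Y) : ℝ :=
  ⨆ S : {S : Set Y // MeasurableSet S}, |(P S.1).toReal - (Q S.1).toReal|

/-- The two-point distribution on `[−1/2,1/2]` putting mass `(1+δ)/2` at `1/2`
and mass `(1−δ)/2` at `−1/2`. -/
def twoPointI (δ : ℝ) : Measure UnitI :=
  ENNReal.ofReal ((1 + δ) / 2) • Measure.dirac ⟨1 / 2, by norm_num⟩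
    + ENNReal.ofReal ((1 - δ) / 2) • Measure.dirac ⟨-(1 / 2), by norm_num⟩

/-!
Conditioning on which of `±1/2` each coordinate takes, both output laws become mixtures
`∑ₛ w(s) m(s)` of the values `m(s) = M(s)(S) ∈ [0, 1]` against the product weights `w` of
`P_δ^{⊗n}` and `P_{-δ}^{⊗n}` on sign patterns `s : Fin n → Bool`. Interpolate through the hybrid
product that uses `P_{-δ}` on the first `k` coordinates and `P_δ` on the others. Switching the law
of a single coordinate `i` moves the mixture by `δ · |m(s⁺) - m(s⁻)| ≤ 2δεᵢ`, by privacy. The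
hybrid and `P_{-δ}^{⊗n}` differ only on the last `n - k` coordinates, and Le Cam's inequality
bounds the distance of their mixtures by `√(1 - B²)`; the Bhattacharyya coefficient `B` is
multiplicative, so `B² = (1 - δ²)^(n-k) ≥ 1 - (n - k)δ²`.
-/

namespace TwoPointDP

open Finset

section FiniteSums

variable {ι : Type*} [Fintype ι]

lemma abs_sum_mul_sub_sum_mul_le {u w m : ι → ℝ} (huw : ∑ s, u s = ∑ s, w s)
    (hm : ∀ s, m s ∈ Set.Icc 0 1) :
    |∑ s, u s * m s - ∑ s, w s * m s| ≤ 1 / 2 * ∑ s, |u s - w s| := by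
  have hcenter : ∑ s, u s * m s - ∑ s, w s * m s = ∑ s, (u s - w s) * (m s - 1 / 2) := by
    simp only [mul_sub, sub_mul, sum_sub_distrib, ← sum_mul, huw]; ring
  rw [hcenter, mul_sum]
  refine (abs_sum_le_sum_abs _ _).trans (sum_le_sum fun s _ => ?_)
  rw [abs_mul, mul_comm]
  gcongr
  rw [abs_le]; constructor <;> linarith [(hm s).1, (hm s).2]

lemma sq_sum_abs_sq_sub_sq_le {a b : ι → ℝ} (ha : ∑ s, a s ^ 2 = 1) (hb : ∑ s, b s ^ 2 = 1) :
    (∑ s, |a s ^ 2 - b s ^ 2|) ^ 2 ≤ 4 * (1 - (∑ s, a s * b s) ^ 2) := by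
  have hsub : ∑ s, |a s - b s| ^ 2 = 2 - 2 * ∑ s, a s * b s := by
    have h : ∀ s, |a s - b s| ^ 2 = a s ^ 2 + b s ^ 2 - 2 * (a s * b s) := fun s => by
      rw [sq_abs]; ring
    simp only [h, sum_sub_distrib, sum_add_distrib, ← mul_sum, ha, hb]; ring
  have hadd : ∑ s, |a s + b s| ^ 2 = 2 + 2 * ∑ s, a s * b s := by
    have h : ∀ s, |a s + b s| ^ 2 = a s ^ 2 + b s ^ 2 + 2 * (a s * b s) := fun s => by
      rw [sq_abs]; ring
    simp only [h, sum_add_distrib, ← mul_sum, ha, hb]; ring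
  have hfactor : ∀ s, |a s ^ 2 - b s ^ 2| = |a s - b s| * |a s + b s| := fun s => by
    rw [← abs_mul]; ring_nf
  calc (∑ s, |a s ^ 2 - b s ^ 2|) ^ 2
      = (∑ s, |a s - b s| * |a s + b s|) ^ 2 := by simp only [hfactor]
    _ ≤ (∑ s, |a s - b s| ^ 2) * ∑ s, |a s + b s| ^ 2 := sum_mul_sq_le_sq_mul_sq _ _ _
    _ = 4 * (1 - (∑ s, a s * b s) ^ 2) := by rw [hsub, hadd]; ring

def bhattacharyya (u w : ι → ℝ) : ℝ := ∑ s, √(u s * w s)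

lemma bhattacharyya_self {u : ι → ℝ} (hu : ∀ s, 0 ≤ u s) : bhattacharyya u u = ∑ s, u s := by
  simp only [bhattacharyya, Real.sqrt_mul_self (hu _)]

lemma half_sum_abs_sub_le_sqrt_one_sub_bhattacharyya_sq {u w : ι → ℝ} (hu : ∀ s, 0 ≤ u s)
    (hw : ∀ s, 0 ≤ w s) (hu1 : ∑ s, u s = 1) (hw1 : ∑ s, w s = 1) :
    1 / 2 * ∑ s, |u s - w s| ≤ √(1 - bhattacharyya u w ^ 2) := by
  have hcs := sq_sum_abs_sq_sub_sq_le (a := fun s => √(u s)) (b := fun s => √(w s))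
    (by simpa only [Real.sq_sqrt (hu _)] using hu1) (by simpa only [Real.sq_sqrt (hw _)] using hw1)
  simp only [Real.sq_sqrt (hu _), Real.sq_sqrt (hw _), ← Real.sqrt_mul (hu _)] at hcs
  apply Real.le_sqrt_of_sq_le
  rw [bhattacharyya]
  linarith

end FiniteSums

section ProductWeights

variable {ι β : Type*} [Fintype ι]

def prodWeight (p : ι → β → ℝ) (s : ι → β) : ℝ := ∏ i, p i (s i)

lemma prodWeight_nonneg {p : ι → β → ℝ} (hp : ∀ i b, 0 ≤ p i b) (s : ι → β) :
    0 ≤ prodWeight p s :=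
  prod_nonneg fun i _ => hp i (s i)

variable [DecidableEq ι] [Fintype β]

lemma sum_prodWeight (p : ι → β → ℝ) : ∑ s, prodWeight p s = ∏ i, ∑ b, p i b :=
  (Fintype.prod_sum p).symm

lemma sum_prodWeight_eq_one {p : ι → β → ℝ} (hp1 : ∀ i, ∑ b, p i b = 1) :
    ∑ s, prodWeight p s = 1 := by
  simp only [sum_prodWeight, hp1, prod_const_one]

lemma bhattacharyya_prodWeight {p p' : ι → β → ℝ} (hp : ∀ i b, 0 ≤ p i b)
    (hp' : ∀ i b, 0 ≤ p' i b) :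
    bhattacharyya (prodWeight p) (prodWeight p') = ∏ i, bhattacharyya (p i) (p' i) := by
  simp only [bhattacharyya]
  rw [Fintype.prod_sum]
  refine sum_congr rfl fun s _ => ?_
  rw [prodWeight, prodWeight, ← prod_mul_distrib,
    Real.sqrt_prod _ fun i _ => mul_nonneg (hp i (s i)) (hp' i (s i))]

lemma abs_sum_prodWeight_mul_sub_le {p p' : ι → β → ℝ} {m : (ι → β) → ℝ}
    (hp : ∀ i b, 0 ≤ p i b) (hp' : ∀ i b, 0 ≤ p' i b) (hp1 : ∀ i, ∑ b, p i b = 1)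
    (hp'1 : ∀ i, ∑ b, p' i b = 1) (hm : ∀ s, m s ∈ Set.Icc 0 1) :
    |∑ s, prodWeight p s * m s - ∑ s, prodWeight p' s * m s|
      ≤ √(1 - (∏ i, bhattacharyya (p i) (p' i)) ^ 2) := by
  rw [← bhattacharyya_prodWeight hp hp']
  exact (abs_sum_mul_sub_sum_mul_le (by rw [sum_prodWeight_eq_one hp1, sum_prodWeight_eq_one hp'1])
    hm).trans (half_sum_abs_sub_le_sqrt_one_sub_bhattacharyya_sq (prodWeight_nonneg hp)
      (prodWeight_nonneg hp') (sum_prodWeight_eq_one hp1) (sum_prodWeight_eq_one hp'1))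

end ProductWeights

section Hybrid

variable {ι : Type*} [Fintype ι] [DecidableEq ι]

lemma sum_prodWeight_mul_eq_sum_split (a : ι) (r : ι → Bool → ℝ) (m : (ι → Bool) → ℝ) :
    ∑ s, prodWeight r s * m s
      = ∑ t : {j // j ≠ a} → Bool, prodWeight (fun j : {j // j ≠ a} => r j) t
          * ∑ b, r a b * m ((Equiv.funSplitAt a Bool).symm (b, t)) := by
  rw [← (Equiv.funSplitAt a Bool).symm.sum_comp, Fintype.sum_prod_type, sum_comm]
  refine sum_congr rfl fun t _ => ?_
  rw [mul_sum]
  refine sum_congr rfl fun b _ => ?_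
  have hrest : ∀ j : {j // j ≠ a}, r j ((Equiv.funSplitAt a Bool).symm (b, t) j) = r j (t j) :=
    fun j => by simp [j.2]
  rw [prodWeight, Fintype.prod_eq_mul_prod_subtype_ne _ a, prod_congr rfl fun j _ => hrest j]
  simp only [Equiv.funSplitAt_symm_apply, ↓reduceDIte, prodWeight]
  ring

lemma abs_sum_prodWeight_update_mul_sub_le {r : ι → Bool → ℝ} {a : ι} {x : Bool → ℝ}
    {m : (ι → Bool) → ℝ} {c : ℝ} (hr : ∀ i b, 0 ≤ r i b) (hr1 : ∀ i, ∑ b, r i b = 1)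
    (hx1 : ∑ b, x b = 1) (hm : ∀ s s', (∀ j, j ≠ a → s j = s' j) → |m s - m s'| ≤ c) :
    |∑ s, prodWeight (Function.update r a x) s * m s - ∑ s, prodWeight r s * m s|
      ≤ |x true - r a true| * c := by
  set e := Equiv.funSplitAt a Bool
  set R := prodWeight fun j : {j // j ≠ a} => r j
  have hR : ∀ t, 0 ≤ R t := prodWeight_nonneg fun j => hr j
  have hdiff : ∀ t, ∑ b, x b * m (e.symm (b, t)) - ∑ b, r a b * m (e.symm (b, t))
      = (x true - r a true) * (m (e.symm (true, t)) - m (e.symm (false, t))) := fun t => by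
    have hx : x true + x false = 1 := by rwa [Fintype.sum_bool] at hx1
    have hra : r a true + r a false = 1 := by rw [← Fintype.sum_bool]; exact hr1 a
    simp only [Fintype.sum_bool]
    linear_combination m (e.symm (false, t)) * (hx - hra)
  calc |∑ s, prodWeight (Function.update r a x) s * m s - ∑ s, prodWeight r s * m s|
      = |∑ t, R t * ((x true - r a true) * (m (e.symm (true, t)) - m (e.symm (false, t))))| := by
        have hupd : (fun j : {j // j ≠ a} => Function.update r a x j)
            = fun j : {j // j ≠ a} => r j :=
          funext fun j => Function.update_of_ne j.2 _ _
        rw [sum_prodWeight_mul_eq_sum_split a, sum_prodWeight_mul_eq_sum_split a, hupd,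
          Function.update_self, ← sum_sub_distrib]
        simp only [← mul_sub]
        exact congrArg abs (sum_congr rfl fun t _ => congrArg _ (hdiff t))
    _ ≤ ∑ t, R t * (|x true - r a true| * c) := by
        refine (abs_sum_le_sum_abs _ _).trans (sum_le_sum fun t _ => ?_)
        rw [abs_mul, abs_of_nonneg (hR t), abs_mul]
        exact mul_le_mul_of_nonneg_left (mul_le_mul_of_nonneg_left
          (hm _ _ fun j hj => by simp [e, hj]) (abs_nonneg _)) (hR t)
    _ = |x true - r a true| * c := by
        rw [← sum_mul, show ∑ t, R t = 1 from sum_prodWeight_eq_one fun j => hr1 j, one_mul]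

lemma abs_sum_prodWeight_piecewise_mul_sub_le {p p' : ι → Bool → ℝ} {m : (ι → Bool) → ℝ}
    {c : ι → ℝ} (hp : ∀ i b, 0 ≤ p i b) (hp' : ∀ i b, 0 ≤ p' i b) (hp1 : ∀ i, ∑ b, p i b = 1)
    (hp'1 : ∀ i, ∑ b, p' i b = 1)
    (hm : ∀ i s s', (∀ j, j ≠ i → s j = s' j) → |m s - m s'| ≤ c i) (A : Finset ι) :
    |∑ s, prodWeight (A.piecewise p' p) s * m s - ∑ s, prodWeight p s * m s|
      ≤ ∑ i ∈ A, |p' i true - p i true| * c i := by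
  induction A using Finset.induction_on with
  | empty => simp
  | insert a A ha ih =>
    have hstep := abs_sum_prodWeight_update_mul_sub_le (r := A.piecewise p' p) (x := p' a)
      (fun i b => A.piecewise_cases p' p (fun y => 0 ≤ y b) (hp' i b) (hp i b))
      (fun i => A.piecewise_cases p' p (fun y => ∑ b, y b = 1) (hp'1 i) (hp1 i)) (hp'1 a) (hm a)
    rw [A.piecewise_eq_of_notMem _ _ ha] at hstep
    rw [A.piecewise_insert, sum_insert ha]
    exact (abs_sub_le _ _ _).trans (add_le_add hstep ih)

end Hybrid

section TwoPointWeight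

def twoPointWeight (δ : ℝ) (b : Bool) : ℝ := if b then (1 + δ) / 2 else (1 - δ) / 2

variable {δ : ℝ}

lemma twoPointWeight_nonneg (hδ : |δ| ≤ 1) (b : Bool) : 0 ≤ twoPointWeight δ b := by
  obtain ⟨h₁, h₂⟩ := abs_le.1 hδ
  cases b <;> simp only [twoPointWeight, Bool.false_eq_true, if_true, if_false] <;> linarith

lemma sum_twoPointWeight (δ : ℝ) : ∑ b, twoPointWeight δ b = 1 := by
  simp only [Fintype.sum_bool, twoPointWeight, if_true, Bool.false_eq_true, if_false]; ring

lemma abs_twoPointWeight_neg_true_sub (δ : ℝ) :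
    |twoPointWeight (-δ) true - twoPointWeight δ true| = |δ| := by
  simp only [twoPointWeight, if_true]
  rw [show (1 + -δ) / 2 - (1 + δ) / 2 = -δ by ring, abs_neg]

lemma bhattacharyya_twoPointWeight_neg_sq (hδ : |δ| ≤ 1) :
    bhattacharyya (twoPointWeight δ) (twoPointWeight (-δ)) ^ 2 = 1 - δ ^ 2 := by
  have hρ : 0 ≤ 1 - δ ^ 2 := by nlinarith [abs_le.1 hδ]
  have h : ∀ b, twoPointWeight δ b * twoPointWeight (-δ) b = (√(1 - δ ^ 2) / 2) ^ 2 := fun b => by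
    rw [div_pow, Real.sq_sqrt hρ]
    cases b <;> simp only [twoPointWeight, if_true, Bool.false_eq_true, if_false] <;> ring
  simp only [bhattacharyya, h, Real.sqrt_sq (div_nonneg (Real.sqrt_nonneg _) zero_le_two),
    Fintype.sum_bool, add_halves, Real.sq_sqrt hρ]

theorem abs_sum_prodWeight_twoPointWeight_mul_sub_le {ι : Type*} [Fintype ι] [DecidableEq ι]
    (A : Finset ι) (hδ0 : 0 ≤ δ) (hδ1 : δ ≤ 1) {ε : ι → ℝ} {m : (ι → Bool) → ℝ}
    (hm01 : ∀ s, m s ∈ Set.Icc 0 1)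
    (hm : ∀ i s s', (∀ j, j ≠ i → s j = s' j) → |m s - m s'| ≤ 2 * ε i) :
    |∑ s, prodWeight (fun _ => twoPointWeight δ) s * m s
        - ∑ s, prodWeight (fun _ => twoPointWeight (-δ)) s * m s|
      ≤ 2 * δ * ∑ i ∈ A, ε i + δ * √(#Aᶜ : ℝ) := by
  have hδ : |δ| ≤ 1 := abs_le.2 ⟨by linarith, hδ1⟩
  have hneg : |-δ| ≤ 1 := by rwa [abs_neg]
  set p : ι → Bool → ℝ := fun _ => twoPointWeight δ
  set p' : ι → Bool → ℝ := fun _ => twoPointWeight (-δ)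
  have hp : ∀ i b, 0 ≤ p i b := fun _ => twoPointWeight_nonneg hδ
  have hp' : ∀ i b, 0 ≤ p' i b := fun _ => twoPointWeight_nonneg hneg
  have hp1 : ∀ i, ∑ b, p i b = 1 := fun _ => sum_twoPointWeight δ
  have hp'1 : ∀ i, ∑ b, p' i b = 1 := fun _ => sum_twoPointWeight (-δ)
  have hprivate : |∑ s, prodWeight p s * m s - ∑ s, prodWeight (A.piecewise p' p) s * m s|
      ≤ 2 * δ * ∑ i ∈ A, ε i := by
    rw [abs_sub_comm]
    refine (abs_sum_prodWeight_piecewise_mul_sub_le hp hp' hp1 hp'1 hm A).trans_eq ?_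
    simp only [p, p', abs_twoPointWeight_neg_true_sub, abs_of_nonneg hδ0, mul_sum]
    exact sum_congr rfl fun i _ => by ring
  have hbhattacharyya :
      (∏ i, bhattacharyya (A.piecewise p' p i) (p' i)) ^ 2 = (1 - δ ^ 2) ^ #Aᶜ := by
    have h : ∀ i, bhattacharyya (A.piecewise p' p i) (p' i) ^ 2
        = if i ∈ A then 1 else 1 - δ ^ 2 := fun i => by
      by_cases hi : i ∈ A
      · rw [if_pos hi, A.piecewise_eq_of_mem _ _ hi, bhattacharyya_self (hp' i), hp'1 i, one_pow]
      · rw [if_neg hi, A.piecewise_eq_of_notMem _ _ hi, bhattacharyya_twoPointWeight_neg_sq hδ]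
    rw [← prod_pow, prod_congr rfl fun i _ => h i, prod_ite, prod_const_one, one_mul, prod_const,
      filter_not, filter_mem_eq_inter, univ_inter, compl_eq_univ_sdiff]
  have hbernoulli : 1 - (1 - δ ^ 2) ^ #Aᶜ ≤ #Aᶜ * δ ^ 2 := by
    have := one_add_mul_le_pow (a := -δ ^ 2) (by nlinarith [abs_le.1 hδ]) #Aᶜ
    rw [← sub_eq_add_neg] at this
    linarith
  have hproduct : |∑ s, prodWeight (A.piecewise p' p) s * m s - ∑ s, prodWeight p' s * m s|
      ≤ δ * √(#Aᶜ : ℝ) := by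
    have hq : ∀ i b, 0 ≤ A.piecewise p' p i b := fun i b =>
      A.piecewise_cases p' p (fun y => 0 ≤ y b) (hp' i b) (hp i b)
    have hq1 : ∀ i, ∑ b, A.piecewise p' p i b = 1 := fun i =>
      A.piecewise_cases p' p (fun y => ∑ b, y b = 1) (hp'1 i) (hp1 i)
    refine (abs_sum_prodWeight_mul_sub_le hq hp' hq1 hp'1 hm01).trans ?_
    rw [hbhattacharyya]
    calc √(1 - (1 - δ ^ 2) ^ #Aᶜ) ≤ √(#Aᶜ * δ ^ 2) := Real.sqrt_le_sqrt hbernoulli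
      _ = δ * √(#Aᶜ : ℝ) := by rw [Real.sqrt_mul' _ (sq_nonneg δ), Real.sqrt_sq hδ0, mul_comm]
  exact (abs_sub_le _ _ _).trans (add_le_add hprivate hproduct)

end TwoPointWeight

section Measures

def boolPoint (b : Bool) : UnitI := if b then ⟨1 / 2, by norm_num⟩ else ⟨-(1 / 2), by norm_num⟩

def twoPointBool (δ : ℝ) : Measure Bool :=
  ENNReal.ofReal (twoPointWeight δ true) • Measure.dirac true
    + ENNReal.ofReal (twoPointWeight δ false) • Measure.dirac false

instance (δ : ℝ) : IsFiniteMeasure (twoPointBool δ) := ⟨by simp [twoPointBool]⟩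

lemma twoPointBool_singleton (δ : ℝ) (b : Bool) :
    twoPointBool δ {b} = ENNReal.ofReal (twoPointWeight δ b) := by
  cases b <;> simp [twoPointBool]

lemma twoPointI_eq_map (δ : ℝ) : twoPointI δ = (twoPointBool δ).map boolPoint := by
  have hb : Measurable boolPoint := .of_discrete
  simp [twoPointI, twoPointBool, Measure.map_add _ _ hb, Measure.map_smul, Measure.map_dirac' hb,
    boolPoint, twoPointWeight]

lemma toReal_bind_pi_twoPointI_apply {n : ℕ} {Y : Type*} [MeasurableSpace Y] {δ : ℝ}
    (hδ : |δ| ≤ 1) (M : Kernel (Dataset n) Y) [IsFiniteKernel M] {S : Set Y}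
    (hS : MeasurableSet S) :
    (((Measure.pi fun _ : Fin n => twoPointI δ).bind (fun x => M x)) S).toReal
      = ∑ s, prodWeight (fun _ => twoPointWeight δ) s
          * (M (fun i => boolPoint (s i)) S).toReal := by
  have hpi : (Measure.pi fun _ : Fin n => twoPointI δ)
      = (Measure.pi fun _ : Fin n => twoPointBool δ).map (fun s i => boolPoint (s i)) := by
    simp_rw [twoPointI_eq_map]
    exact (Measure.pi_map_pi fun _ => Measurable.of_discrete.aemeasurable).symm
  rw [Measure.bind_apply hS M.measurable.aemeasurable, hpi,
    lintegral_map (M.measurable_coe hS) Measurable.of_discrete, lintegral_fintype,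
    ENNReal.toReal_sum fun s _ => ENNReal.mul_ne_top (measure_ne_top _ _) (measure_ne_top _ _)]
  simp [twoPointBool_singleton, ENNReal.toReal_prod, prodWeight,
    ENNReal.toReal_ofReal (twoPointWeight_nonneg hδ _), mul_comm]

end Measures

end TwoPointDP

section Privacy

lemma sub_le_two_mul_of_le_exp_mul {a b E : ℝ} (ha : a ≤ 1) (hb : b ∈ Set.Icc 0 1) (hE : 0 ≤ E)
    (h : a ≤ exp E * b) : a - b ≤ 2 * E := by
  rcases le_or_gt E 1 with hE1 | hE1
  · have hexp : exp E - 1 ≤ 2 * E := by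
      simpa [abs_of_nonneg hE] using
        (le_abs_self _).trans (Real.abs_exp_sub_one_le (x := E) (by rwa [abs_of_nonneg hE]))
    nlinarith [Real.add_one_le_exp E, hb.1, hb.2]
  · linarith [hb.1]

lemma INeighbor.symm {n : ℕ} {i : Fin n} {x x' : Dataset n} (h : INeighbor i x x') :
    INeighbor i x' x :=
  fun j hj => (h j hj).symm

lemma IsDP.abs_toReal_sub_le {n : ℕ} {Y : Type} [MeasurableSpace Y] {ε : Fin n → ℝ}
    {M : Kernel (Dataset n) Y} [IsMarkovKernel M] (hDP : IsDP ε M) {i : Fin n} (hε : 0 ≤ ε i)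
    {x x' : Dataset n} (hxx' : INeighbor i x x') {S : Set Y} (hS : MeasurableSet S) :
    |(M x S).toReal - (M x' S).toReal| ≤ 2 * ε i := by
  have hle : ∀ {x x'}, INeighbor i x x' → (M x S).toReal ≤ exp (ε i) * (M x' S).toReal :=
    fun h => by
      have := ENNReal.toReal_mono (ENNReal.mul_ne_top ENNReal.ofReal_ne_top (measure_ne_top _ _))
        (hDP i _ _ h S hS)
      rwa [ENNReal.toReal_mul, ENNReal.toReal_ofReal (exp_nonneg _)] at this
  have h01 : ∀ x, (M x S).toReal ∈ Set.Icc 0 1 := fun x => ⟨measureReal_nonneg, measureReal_le_one⟩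
  rw [abs_sub_le_iff]
  exact ⟨sub_le_two_mul_of_le_exp_mul (h01 x).2 (h01 x') hε (hle hxx'),
    sub_le_two_mul_of_le_exp_mul (h01 x').2 (h01 x) hε (hle hxx'.symm)⟩

end Privacy

theorem twoPoint_output_tv_bound
    (n : ℕ) {Y : Type} [MeasurableSpace Y]
    (δ : ℝ) (hδ0 : 0 ≤ δ) (hδ : δ ≤ 1 / 2)
    (ε : Fin n → ℝ) (hε : ∀ i, 0 ≤ ε i)
    (M : Kernel (Dataset n) Y) (hM : IsMarkovKernel M) (hDP : IsDP ε M)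
    (k : ℕ) (hk : k ≤ n) :
    tvDist ((Measure.pi fun _ : Fin n => twoPointI δ).bind (fun x => M x))
        ((Measure.pi fun _ : Fin n => twoPointI (-δ)).bind (fun x => M x))
      ≤ 2 * δ * (∑ i : Fin n, if (i : ℕ) < k then ε i else 0)
        + δ * Real.sqrt (3 * ((n : ℝ) - k) / 2) := by
  have hδ1 : |δ| ≤ 1 := abs_le.2 ⟨by linarith, by linarith⟩
  refine ciSup_le fun ⟨S, hS⟩ => ?_
  rw [TwoPointDP.toReal_bind_pi_twoPointI_apply hδ1 M hS,
    TwoPointDP.toReal_bind_pi_twoPointI_apply (by rwa [abs_neg]) M hS]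
  refine (TwoPointDP.abs_sum_prodWeight_twoPointWeight_mul_sub_le
    (Finset.univ.filter fun i : Fin n => (i : ℕ) < k) hδ0 (by linarith)
    (fun s => ⟨measureReal_nonneg, measureReal_le_one⟩)
    (fun i s s' h => hDP.abs_toReal_sub_le (hε i) (fun j hj => by rw [h j hj]) hS)).trans ?_
  rw [Finset.sum_filter, Finset.card_compl, Fin.card_filter_val_lt, Fintype.card_fin,
    min_eq_right hk, Nat.cast_sub hk]
  have hnk : (0 : ℝ) ≤ n - k := sub_nonneg.2 (Nat.cast_le.2 hk)
  gcongr
  linarith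
end
end

section
/- For all r ∈ [1, R], U(r) ≤ L₂ + L₃(r). Consequently, the upper-bound expression U(r) in the regime 1 ≤ r ≤ R is dominated by the sum of the two lower-bound expressions L₂ and L₃(r). -/
/-!
Writing `f R = f + f (R - 1)` splits `U(r)` into `L₃(r)` plus `(f + (1-f) r²) / (4n D(r)²)`, where
`D(r) = f + (1-f) r`; the latter is at most `L₂` because, with `g = 1 - f`,
`R D(r)² - (f + g r²) D(R) = f (R - 1) D(r) + f g (r - 1) (R - r) ≥ 0` on `1 ≤ r ≤ R`.
-/

lemma add_mul_sq_mul_add_mul_le {f g r R : ℝ} (hf : 0 ≤ f) (hg : 0 ≤ g) (hr : 1 ≤ r)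
    (hrR : r ≤ R) :
    (f + g * r ^ 2) * (f + g * R) ≤ R * (f + g * r) ^ 2 := by
  have hgap : R * (f + g * r) ^ 2 - (f + g * r ^ 2) * (f + g * R)
      = f * (R - 1) * (f + g * r) + f * g * ((r - 1) * (R - r)) := by ring
  have hR : 0 ≤ R - 1 := by linarith
  have hrR' : 0 ≤ (r - 1) * (R - r) := mul_nonneg (by linarith) (by linarith)
  have hD : 0 ≤ f + g * r := by positivity
  have : 0 ≤ f * (R - 1) * (f + g * r) + f * g * ((r - 1) * (R - r)) := by positivity
  linarith

lemma add_mul_sq_div_le_div {c f g r R : ℝ} (hc : 0 < c) (hf : 0 < f) (hg : 0 ≤ g)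
    (hr : 1 ≤ r) (hrR : r ≤ R) :
    (f + g * r ^ 2) / (c * (f + g * r) ^ 2) ≤ R / (c * (f + g * R)) := by
  have hR : 0 ≤ R := by linarith
  rw [div_le_div_iff₀ (by positivity) (by positivity)]
  calc (f + g * r ^ 2) * (c * (f + g * R)) = c * ((f + g * r ^ 2) * (f + g * R)) := by ring
    _ ≤ c * (R * (f + g * r) ^ 2) :=
      mul_le_mul_of_nonneg_left (add_mul_sq_mul_add_mul_le hf.le hg hr hrR) hc.le
    _ = R * (c * (f + g * r) ^ 2) := by ring

theorem upper_bound_dominated_by_sum_of_lower_bounds_general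
    (n f R : ℝ)
    (hn : 1 ≤ n) (hf0 : 0 < f) (hf1 : f < 1) :
    ∀ r : ℝ, 1 ≤ r → r ≤ R →
      (f * R + (1 - f) * r ^ 2) / (4 * n * (f + (1 - f) * r) ^ 2)
        ≤ R / (4 * n * (f + (1 - f) * R))
          + f * (R - 1) / (4 * n * (f + (1 - f) * r) ^ 2) := by
  intro r hr hrR
  have hsplit : (f * R + (1 - f) * r ^ 2) / (4 * n * (f + (1 - f) * r) ^ 2)
      = (f + (1 - f) * r ^ 2) / (4 * n * (f + (1 - f) * r) ^ 2)
        + f * (R - 1) / (4 * n * (f + (1 - f) * r) ^ 2) := by ring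
  have hbound := add_mul_sq_div_le_div (c := 4 * n) (g := 1 - f) (by linarith) hf0
    (by linarith) hr hrR
  rw [hsplit]
  exact add_le_add_left hbound _

theorem upper_bound_dominated_by_sum_of_lower_bounds
    (n f ε₁ R : ℝ)
    (hn : 1 ≤ n) (hf0 : 0 < f) (hf1 : f < 1) (hε₁ : 0 < ε₁)
    (hR : R = 1 + 8 / (n * f * ε₁ ^ 2)) :
    ∀ r : ℝ, 1 ≤ r → r ≤ R →
      (f * R + (1 - f) * r ^ 2) / (4 * n * (f + (1 - f) * r) ^ 2)
        ≤ R / (4 * n * (f + (1 - f) * R))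
          + f * (R - 1) / (4 * n * (f + (1 - f) * r) ^ 2) :=
  upper_bound_dominated_by_sum_of_lower_bounds_general n f R hn hf0 hf1
end
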